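/- arXiv:1408.2721 — 7 statements merged into one kernel-verified Lean document; each statement's English description precedes it below -/
import Mathlib

section
/- Let f₁, …, f_m ∈ ℚ[x₁,…,x_n], let I = ⟨f₁,…,f_m⟩, and fix λ = (λ₁,…,λ_n) ∈ ℚⁿ. Let B be a positive integer such that for every RUR (q*, v₁*, …, v_n*) of a rational component of I with respect to λ, every coefficient of q* and of each v_i*, written in lowest terms, has numerator and denominator of absolute value at most B. Let q(T), v₁(T), …, v_n(T) be polynomials with real coefficients, and let q̂(T), v̂₁(T), …, v̂_n(T) ∈ ℚ[T] be polynomials each of whose coefficients is a rational number with denominator at most B lying strictly within distance 1/(2B²) of the corresponding coefficient of q (resp. v_i). If f_j(v̂₁(T),…,v̂_n(T)) is not divisible by q̂(T) in ℚ[T] for some j, then there exists no RUR of a rational component of I with respect to λ all of whose coefficients lie strictly within distance 1/(2B²) of the corresponding coefficients of q, v₁, …, v_n. (Theorem 2.11, with the paper's a priori height bound made an explicit hypothesis.) -/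
lemma rat_eq_of_close (B : ℕ) (hB : 0 < B) (a b : ℚ) (ha : a.den ≤ B) (hb : b.den ≤ B)
    (h : |(a : ℝ) - (b : ℝ)| < 1 / (B : ℝ) ^ 2) : a = b := by
  by_contra hne
  set c : ℚ := a - b with hc
  have hsub : c ≠ 0 := sub_ne_zero.mpr hne
  have hden : ((c).den : ℝ) ≤ (B : ℝ) ^ 2 := by
    have := Rat.add_den_dvd a (-b)
    rw [Rat.neg_den] at this
    have hle : c.den ≤ a.den * b.den := Nat.le_of_dvd (Nat.mul_pos a.pos b.pos) (by simpa [hc, sub_eq_add_neg] using this)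
    have : c.den ≤ B * B := hle.trans (Nat.mul_le_mul ha hb)
    have := (Nat.cast_le (α := ℝ)).mpr this
    push_cast at this ⊢
    nlinarith
  have hnum : (1 : ℝ) ≤ |(c.num : ℝ)| := by
    have h0 : c.num ≠ 0 := Rat.num_ne_zero.mpr hsub
    have : 1 ≤ |c.num| := Int.one_le_abs h0
    calc (1:ℝ) = ((1:ℤ):ℝ) := by norm_num
    _ ≤ ((|c.num|:ℤ):ℝ) := by exact_mod_cast this
    _ = |(c.num : ℝ)| := by push_cast; ring
  have hcr : (c : ℝ) = (c.num : ℝ) / (c.den : ℝ) := by exact_mod_cast (Rat.num_div_den c).symm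
  have hdpos : (0 : ℝ) < (c.den : ℝ) := by exact_mod_cast c.pos
  have hBpos : (0:ℝ) < (B:ℝ)^2 := by positivity
  have : |(a : ℝ) - (b : ℝ)| = |(c.num : ℝ)| / (c.den : ℝ) := by
    rw [show (a:ℝ) - b = (c:ℝ) by push_cast [hc]; ring, hcr, abs_div, abs_of_pos hdpos]
  rw [this] at h
  have h1 : (1:ℝ) / (B:ℝ)^2 ≤ |(c.num:ℝ)| / c.den := by
    calc (1:ℝ)/(B:ℝ)^2 ≤ 1 / c.den := by apply one_div_le_one_div_of_le hdpos hden
    _ ≤ |(c.num:ℝ)| / c.den := by gcongr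
  linarith



/-- An RUR (Rational Univariate Representation) of a rational component of the ideal
generated by `f₁,…,f_m` with respect to the linear form `λ₁x₁ + ⋯ + λ_n x_n`:
`q` is monic squarefree of degree `d ≥ 1`, each `vᵢ` has degree at most `d - 1`,
`λ₁v₁ + ⋯ + λ_n v_n ≡ T mod q`, and `f_j(v₁,…,v_n) ≡ 0 mod q` for all `j`. -/
def IsRURofRationalComponent {n m : ℕ} (f : Fin m → MvPolynomial (Fin n) ℚ)
    (lam : Fin n → ℚ) (q : Polynomial ℚ) (v : Fin n → Polynomial ℚ) : Prop :=
  q.Monic ∧ Squarefree q ∧ 1 ≤ q.natDegree ∧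
  (∀ i, (v i).degree < q.degree) ∧
  q ∣ (∑ i, Polynomial.C (lam i) * v i - Polynomial.X) ∧
  ∀ j, q ∣ MvPolynomial.aeval v (f j)

/-- Theorem 2.11: if the reconstructed rational polynomials `q̂, v̂ᵢ` (with denominators
bounded by `B`, each coefficient within `1/(2B²)` of the approximate RUR `q, vᵢ`)
fail the divisibility test, then no RUR of a rational component of `⟨f₁,…,f_m⟩`
lies within `1/(2B²)` of the approximate RUR. -/
theorem no_rational_RUR_within_accuracy (n m : ℕ)
    (f : Fin m → MvPolynomial (Fin n) ℚ) (lam : Fin n → ℚ)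
    (B : ℕ) (hBpos : 0 < B)
    (hbound : ∀ (qs : Polynomial ℚ) (vs : Fin n → Polynomial ℚ),
      IsRURofRationalComponent f lam qs vs →
      (∀ k, (qs.coeff k).num.natAbs ≤ B ∧ (qs.coeff k).den ≤ B) ∧
      (∀ i k, ((vs i).coeff k).num.natAbs ≤ B ∧ ((vs i).coeff k).den ≤ B))
    (q : Polynomial ℝ) (v : Fin n → Polynomial ℝ)
    (qhat : Polynomial ℚ) (vhat : Fin n → Polynomial ℚ)
    (hqhatden : ∀ k, (qhat.coeff k).den ≤ B)
    (hvhatden : ∀ i k, ((vhat i).coeff k).den ≤ B)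
    (hqhat : ∀ k, |((qhat.coeff k : ℝ)) - q.coeff k| < 1 / (2 * (B : ℝ) ^ 2))
    (hvhat : ∀ i k, |(((vhat i).coeff k : ℝ)) - (v i).coeff k| < 1 / (2 * (B : ℝ) ^ 2))
    (hnotdiv : ∃ j, ¬ qhat ∣ MvPolynomial.aeval vhat (f j)) :
    ¬ ∃ (qs : Polynomial ℚ) (vs : Fin n → Polynomial ℚ),
        IsRURofRationalComponent f lam qs vs ∧
        (∀ k, |((qs.coeff k : ℝ)) - q.coeff k| < 1 / (2 * (B : ℝ) ^ 2)) ∧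
        (∀ i k, |(((vs i).coeff k : ℝ)) - (v i).coeff k| < 1 / (2 * (B : ℝ) ^ 2)) := by
  rintro ⟨qs, vs, hRUR, hqs, hvs⟩
  obtain ⟨j, hj⟩ := hnotdiv
  obtain ⟨hqb, hvb⟩ := hbound qs vs hRUR
  have hB2 : (0:ℝ) < (B:ℝ)^2 := by positivity
  have half : (1:ℝ) / (2 * (B:ℝ)^2) + 1 / (2 * (B:ℝ)^2) = 1 / (B:ℝ)^2 := by
    field_simp; ring
  have hq_eq : qhat = qs := by
    ext k
    refine rat_eq_of_close B hBpos _ _ (hqhatden k) (hqb k).2 ?_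
    calc |((qhat.coeff k : ℝ)) - (qs.coeff k : ℝ)|
        ≤ |((qhat.coeff k : ℝ)) - q.coeff k| + |((qs.coeff k : ℝ)) - q.coeff k| := by
          rw [show ((qhat.coeff k : ℝ)) - (qs.coeff k : ℝ)
            = (((qhat.coeff k : ℝ)) - q.coeff k) - (((qs.coeff k : ℝ)) - q.coeff k) by ring]
          exact abs_sub _ _
      _ < 1 / (B:ℝ)^2 := by rw [← half]; exact add_lt_add (hqhat k) (hqs k)
  have hv_eq : vhat = vs := by
    funext i
    ext k
    refine rat_eq_of_close B hBpos _ _ (hvhatden i k) ((hvb i k).2) ?_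
    calc |(((vhat i).coeff k : ℝ)) - ((vs i).coeff k : ℝ)|
        ≤ |(((vhat i).coeff k : ℝ)) - (v i).coeff k| + |(((vs i).coeff k : ℝ)) - (v i).coeff k| := by
          rw [show (((vhat i).coeff k : ℝ)) - ((vs i).coeff k : ℝ)
            = ((((vhat i).coeff k : ℝ)) - (v i).coeff k) - ((((vs i).coeff k : ℝ)) - (v i).coeff k) by ring]
          exact abs_sub _ _
      _ < 1 / (B:ℝ)^2 := by rw [← half]; exact add_lt_add (hvhat i k) (hvs i k)
  exact hj (hq_eq ▸ hv_eq ▸ hRUR.2.2.2.2.2 j)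
end

section
/- Let I ⊆ ℚ[x₁,…,x_n] be a radical ideal such that the quotient algebra A = ℚ[x₁,…,x_n]/I is a finite-dimensional ℚ-vector space, of dimension δ. Then there exists λ = (λ₁,…,λ_n) ∈ ℚⁿ such that the image ū in A of u = λ₁x₁ + ⋯ + λ_nx_n generates A as a ℚ-algebra; equivalently, the powers 1, ū, ū², …, ū^{δ−1} span A as a ℚ-vector space. (Existence of a primitive element for a zero-dimensional radical ideal over ℚ.) -/
/-!
A reduced finite-dimensional algebra `A` over a perfect field is a finite product of separable
field extensions, so it has exactly `δ = dim A` algebra maps into an algebraically closed field.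
Over an infinite field, a generic linear combination `u` of the generators takes pairwise distinct
values under these maps: for each pair of distinct maps, the coefficient vectors on which they
agree form a proper subspace, and finitely many proper subspaces do not cover the space. These
`δ` values are distinct roots of the minimal polynomial of `u`, which therefore has degree `δ`,
so `1, u, …, u ^ (δ - 1)` are linearly independent and hence a basis of `A`.
-/

open Polynomial

variable {F : Type*} [Field F]

theorem AlgHom.exists_injective_apply_linearCombination [Infinite F] {A Ω : Type*} [CommRing A]
    [Algebra F A] [Ring Ω] [Algebra F Ω] [_root_.Finite (A →ₐ[F] Ω)] {ι : Type*} [Fintype ι]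
    {x : ι → A} (hx : Algebra.adjoin F (Set.range x) = ⊤) :
    ∃ c : ι → F, Function.Injective fun φ : A →ₐ[F] Ω => φ (∑ i, c i • x i) := by
  classical
  let K (p : {p : (A →ₐ[F] Ω) × (A →ₐ[F] Ω) // p.1 ≠ p.2}) : Subspace F (ι → F) :=
    LinearMap.ker ((p.1.1.toLinearMap - p.1.2.toLinearMap) ∘ₗ Fintype.linearCombination F x)
  have hK (p) : K p ≠ ⊤ := by
    obtain ⟨⟨φ, ψ⟩, hne⟩ := p
    refine fun htop => hne (AlgHom.ext_of_adjoin_eq_top hx ?_)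
    rintro _ ⟨i, rfl⟩
    simpa [K, Fintype.linearCombination_apply_single, sub_eq_zero] using
      LinearMap.congr_fun (LinearMap.ker_eq_top.mp htop) (Pi.single i 1)
  obtain ⟨c, hc⟩ : ∃ c, c ∉ ⋃ p, (K p : Set (ι → F)) := by
    by_contra! h
    obtain ⟨p, hp⟩ := Subspace.exists_eq_top_of_iUnion_eq_univ (Set.eq_univ_of_forall h)
    exact hK p hp
  refine ⟨c, fun φ ψ h => by_contra fun hne => hc (Set.mem_iUnion.mpr ⟨⟨(φ, ψ), hne⟩, ?_⟩)⟩
  simpa [K, Fintype.linearCombination_apply, smul_sub, sub_eq_zero] using h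

theorem AlgHom.sigma_comp_evalAlgHom_injective {ι : Type*} {L : ι → Type*} [∀ i, Semiring (L i)]
    [∀ i, Algebra F (L i)] {Ω : Type*} [Semiring Ω] [Nontrivial Ω] [Algebra F Ω] :
    Function.Injective fun t : Σ i, (L i →ₐ[F] Ω) => t.2.comp (Pi.evalAlgHom F L t.1) := by
  classical
  rintro ⟨i, σ⟩ ⟨j, τ⟩ h
  have h_apply (a : Π i, L i) : σ (a i) = τ (a j) := congr($h a)
  obtain rfl : i = j := by
    by_contra hij
    simpa [hij] using h_apply (Pi.single i 1)
  refine Sigma.ext rfl (heq_of_eq (AlgHom.ext fun a => ?_))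
  simpa using h_apply (Pi.single i a)

theorem AlgHom.natCard_pi_eq_finrank {ι : Type*} [_root_.Finite ι] (L : ι → Type*)
    [∀ i, Field (L i)] [∀ i, Algebra F (L i)] [∀ i, FiniteDimensional F (L i)]
    [∀ i, Algebra.IsSeparable F (L i)]
    (Ω : Type*) [Field Ω] [IsAlgClosed Ω] [Algebra F Ω] :
    Nat.card ((Π i, L i) →ₐ[F] Ω) = Module.finrank F (Π i, L i) := by
  have := Fintype.ofFinite ι
  refine le_antisymm (card_algHom_le_finrank _ _ _) ?_
  calc Module.finrank F (Π i, L i)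
      = ∑ i, Nat.card (L i →ₐ[F] Ω) := by simp [Module.finrank_pi_fintype]
    _ = Nat.card (Σ i, (L i →ₐ[F] Ω)) := Nat.card_sigma.symm
    _ ≤ Nat.card ((Π i, L i) →ₐ[F] Ω) :=
        Nat.card_le_card_of_injective _ AlgHom.sigma_comp_evalAlgHom_injective

theorem AlgHom.natCard_eq_finrank_of_isReduced [PerfectField F] (A : Type*) [CommRing A]
    [Algebra F A] [FiniteDimensional F A] [IsReduced A] (Ω : Type*) [Field Ω] [IsAlgClosed Ω]
    [Algebra F Ω] : Nat.card (A →ₐ[F] Ω) = Module.finrank F A := by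
  have : IsArtinianRing A := .of_finite F A
  let e := (IsArtinianRing.equivPi A).restrictScalars F
  let (m : MaximalSpectrum A) : Field (A ⧸ m.asIdeal) := Ideal.Quotient.field _
  have (m : MaximalSpectrum A) : Algebra.IsSeparable F (A ⧸ m.asIdeal) := inferInstance
  rw [Nat.card_congr (e.arrowCongr AlgEquiv.refl), e.toLinearEquiv.finrank_eq]
  exact AlgHom.natCard_pi_eq_finrank _ Ω

theorem span_range_pow_eq_top_of_injective_apply {A Ω : Type*} [CommRing A] [Algebra F A]
    [FiniteDimensional F A] [CommRing Ω] [IsDomain Ω] [Algebra F Ω] {u : A}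
    (hu : Function.Injective fun φ : A →ₐ[F] Ω => φ u)
    (hcard : Module.finrank F A ≤ Nat.card (A →ₐ[F] Ω)) :
    Submodule.span F (Set.range fun j : Fin (Module.finrank F A) => u ^ (j : ℕ)) = ⊤ := by
  have hroot (φ : A →ₐ[F] Ω) : φ u ∈ (minpoly F u).rootSet Ω := by
    rw [mem_rootSet_of_ne (minpoly.ne_zero (IsIntegral.of_finite F u)), aeval_algHom_apply,
      minpoly.aeval, map_zero]
  have hdeg : (minpoly F u).natDegree = Module.finrank F A := by
    refine le_antisymm (minpoly.natDegree_le u) (hcard.trans ?_)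
    calc Nat.card (A →ₐ[F] Ω)
        ≤ Nat.card ((minpoly F u).rootSet Ω) :=
          Nat.card_le_card_of_injective (fun φ => ⟨φ u, hroot φ⟩)
            fun φ ψ h => hu congr(($h).val)
      _ = ((minpoly F u).rootSet Ω).ncard := Nat.card_coe_set_eq _
      _ ≤ (minpoly F u).natDegree := ncard_rootSet_le _ _
  have hli := linearIndependent_pow (K := F) u
  rw [hdeg] at hli
  exact hli.span_eq_top_of_card_eq_finrank' (Fintype.card_fin _)

theorem Algebra.adjoin_singleton_eq_top_of_span_pow_eq_top {R A : Type*} [CommSemiring R]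
    [Semiring A] [Algebra R A] {u : A} {ι : Type*} {k : ι → ℕ}
    (h : Submodule.span R (Set.range fun i => u ^ k i) = ⊤) : Algebra.adjoin R {u} = ⊤ := by
  rw [← Algebra.toSubmodule_eq_top, ← top_le_iff, ← h, Submodule.span_le]
  rintro _ ⟨i, rfl⟩
  exact pow_mem (Algebra.self_mem_adjoin_singleton R u) _

/-- Existence of a primitive element for a zero-dimensional radical ideal over ℚ:
there is a rational linear form `u = λ₁x₁ + ⋯ + λ_n x_n` whose image `ū` in the
quotient algebra `A = ℚ[x₁,…,x_n]/I` generates `A` as a ℚ-algebra; equivalently,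
the powers `1, ū, …, ū^(δ-1)` (with `δ = dim_ℚ A`) span `A` as a ℚ-vector space. -/
theorem exists_primitive_element (n : ℕ) (I : Ideal (MvPolynomial (Fin n) ℚ))
    (hrad : I.IsRadical)
    (hfd : FiniteDimensional ℚ (MvPolynomial (Fin n) ℚ ⧸ I)) :
    ∃ lam : Fin n → ℚ,
      Algebra.adjoin ℚ
        {Ideal.Quotient.mk I (∑ i, MvPolynomial.C (lam i) * MvPolynomial.X i)} = ⊤ ∧
      Submodule.span ℚ
        (Set.range fun j : Fin (Module.finrank ℚ (MvPolynomial (Fin n) ℚ ⧸ I)) =>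
          (Ideal.Quotient.mk I (∑ i, MvPolynomial.C (lam i) * MvPolynomial.X i)) ^ (j : ℕ)) =
        ⊤ := by
  have : IsReduced (MvPolynomial (Fin n) ℚ ⧸ I) :=
    (Ideal.isRadical_iff_quotient_reduced I).mp hrad
  have hgen :
      Algebra.adjoin ℚ (Set.range fun i => Ideal.Quotient.mk I (MvPolynomial.X i)) = ⊤ := by
    rw [show (fun i => Ideal.Quotient.mk I (MvPolynomial.X i)) = Ideal.Quotient.mkₐ ℚ I ∘
        MvPolynomial.X from rfl, Set.range_comp, ← AlgHom.map_adjoin, MvPolynomial.adjoin_range_X,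
      Algebra.map_top, AlgHom.range_eq_top]
    exact Ideal.Quotient.mkₐ_surjective ℚ I
  obtain ⟨lam, hlam⟩ :=
    AlgHom.exists_injective_apply_linearCombination (Ω := AlgebraicClosure ℚ) hgen
  have hu : Ideal.Quotient.mk I (∑ i, MvPolynomial.C (lam i) * MvPolynomial.X i) =
      ∑ i, lam i • Ideal.Quotient.mk I (MvPolynomial.X i) := by
    rw [← Ideal.Quotient.mkₐ_eq_mk ℚ]
    simp only [map_sum, MvPolynomial.C_mul', map_smul]
  refine ⟨lam, ?_⟩
  rw [hu]
  have hspan := span_range_pow_eq_top_of_injective_apply hlam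
    (AlgHom.natCard_eq_finrank_of_isReduced _ _).ge
  exact ⟨Algebra.adjoin_singleton_eq_top_of_span_pow_eq_top hspan, hspan⟩
end

section
/- Let I ⊆ ℚ[x₁,…,x_n] be an ideal such that A = ℚ[x₁,…,x_n]/I is a finite-dimensional ℚ-vector space. Let λ₁,…,λ_n ∈ ℚ, set u = λ₁x₁ + ⋯ + λ_nx_n, let q(T) ∈ ℚ[T] be the minimal polynomial over ℚ of the image ū of u in A, and suppose v₁(T),…,v_n(T) ∈ ℚ[T] satisfy x_i − v_i(u) ∈ I for all i = 1,…,n. Then in the polynomial ring ℚ[x₁,…,x_n,T], the ideal generated by q(T), x₁ − v₁(T), …, x_n − v_n(T) equals the ideal generated by I together with T − (λ₁x₁ + ⋯ + λ_nx_n). -/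
/-- For a zero-dimensional ideal `I ⊆ ℚ[x₁,…,x_n]`, with `u = λ₁x₁ + ⋯ + λ_n x_n`,
`q` the minimal polynomial of the image of `u` in `ℚ[x₁,…,x_n]/I`, and `vᵢ ∈ ℚ[T]`
with `xᵢ − vᵢ(u) ∈ I`: in `ℚ[x₁,…,x_n,T]` (realized as `(ℚ[x₁,…,x_n])[T]`) the
ideal generated by `q(T), x₁ − v₁(T), …, x_n − v_n(T)` equals the ideal generated
by `I` together with `T − u`. -/
theorem triangular_ideal_eq (n : ℕ) (I : Ideal (MvPolynomial (Fin n) ℚ))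
    (hfd : FiniteDimensional ℚ (MvPolynomial (Fin n) ℚ ⧸ I))
    (lam : Fin n → ℚ) (v : Fin n → Polynomial ℚ) (q : Polynomial ℚ)
    (hq : q = minpoly ℚ
      (Ideal.Quotient.mk I (∑ i, MvPolynomial.C (lam i) * MvPolynomial.X i)))
    (hv : ∀ i, MvPolynomial.X i -
      Polynomial.aeval (∑ j, MvPolynomial.C (lam j) * MvPolynomial.X j) (v i) ∈ I) :
    Ideal.span
        ({q.map (MvPolynomial.C : ℚ →+* MvPolynomial (Fin n) ℚ)} ∪
          Set.range fun i =>
            Polynomial.C (MvPolynomial.X i) - (v i).map MvPolynomial.C) =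
      Ideal.span
        ((Polynomial.C '' (I : Set (MvPolynomial (Fin n) ℚ))) ∪
          {Polynomial.X -
            Polynomial.C (∑ i, MvPolynomial.C (lam i) * MvPolynomial.X i)}) := by
  classical
  set u : MvPolynomial (Fin n) ℚ := ∑ i, MvPolynomial.C (lam i) * MvPolynomial.X i with hu
  set J := Ideal.span
        ({q.map (MvPolynomial.C : ℚ →+* MvPolynomial (Fin n) ℚ)} ∪
          Set.range fun i =>
            Polynomial.C (MvPolynomial.X i) - (v i).map MvPolynomial.C) with hJ
  set K := Ideal.span
        ((Polynomial.C '' (I : Set (MvPolynomial (Fin n) ℚ))) ∪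
          {Polynomial.X - Polynomial.C u}) with hK
  -- basic facts
  have hmk : ∀ p : Polynomial ℚ, Ideal.Quotient.mk I (Polynomial.aeval u p)
      = Polynomial.aeval (Ideal.Quotient.mk I u) p := fun p => by
    simpa using (Polynomial.aeval_algHom_apply (Ideal.Quotient.mkₐ ℚ I) u p).symm
  have hvmk : ∀ i, Polynomial.aeval (Ideal.Quotient.mk I u) (v i)
      = Ideal.Quotient.mk I (MvPolynomial.X i) := fun i => by
    rw [← hmk]
    exact ((Ideal.Quotient.eq).2 (hv i)).symm
  have hdvd_of : ∀ p : Polynomial ℚ,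
      Polynomial.aeval (Ideal.Quotient.mk I u) p = 0 → q ∣ p := fun p hp =>
    hq ▸ minpoly.dvd ℚ _ hp
  have hqJ : ∀ p : Polynomial ℚ, q ∣ p → p.map MvPolynomial.C ∈ J := by
    rintro p ⟨c, rfl⟩
    rw [Polynomial.map_mul]
    exact Ideal.mul_mem_right _ _ (Ideal.subset_span (Or.inl rfl))
  -- the substitution X i ↦ v i (T)
  set σ : MvPolynomial (Fin n) ℚ →ₐ[ℚ] Polynomial (MvPolynomial (Fin n) ℚ) :=
    MvPolynomial.aeval (fun i => (v i).map MvPolynomial.C) with hσdef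
  have hmapC : ∀ p : Polynomial ℚ,
      Polynomial.mapAlgHom (Algebra.ofId ℚ (MvPolynomial (Fin n) ℚ)) p
        = p.map MvPolynomial.C := fun p => by
    have h1 := congrFun (Polynomial.coe_mapAlgHom (Algebra.ofId ℚ (MvPolynomial (Fin n) ℚ))) p
    have h2 : ((Algebra.ofId ℚ (MvPolynomial (Fin n) ℚ)) : ℚ →+* MvPolynomial (Fin n) ℚ)
        = MvPolynomial.C := Subsingleton.elim _ _
    rw [h1, h2]
  have hσeq : ∀ a, σ a = ((MvPolynomial.aeval v) a).map MvPolynomial.C := by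
    intro a
    have hc := MvPolynomial.comp_aeval v (Polynomial.mapAlgHom
      (Algebra.ofId ℚ (MvPolynomial (Fin n) ℚ)))
    have heq : MvPolynomial.aeval
        (fun i => Polynomial.mapAlgHom (Algebra.ofId ℚ (MvPolynomial (Fin n) ℚ)) (v i)) = σ := by
      rw [hσdef]
      exact congrArg MvPolynomial.aeval (funext fun i => hmapC (v i))
    calc σ a = ((Polynomial.mapAlgHom (Algebra.ofId ℚ (MvPolynomial (Fin n) ℚ))).comp
          (MvPolynomial.aeval v)) a := by rw [hc, heq]
      _ = ((MvPolynomial.aeval v) a).map MvPolynomial.C := hmapC _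
  have hcomp : (Polynomial.aeval (Ideal.Quotient.mk I u)).comp (MvPolynomial.aeval v)
      = Ideal.Quotient.mkₐ ℚ I := by
    apply MvPolynomial.algHom_ext
    intro i
    simp [hvmk i]
  have hcompa : ∀ a, Polynomial.aeval (Ideal.Quotient.mk I u) (MvPolynomial.aeval v a)
      = Ideal.Quotient.mk I a := fun a => by
    have := DFunLike.congr_fun hcomp a
    simpa using this
  have hσmem : ∀ a ∈ I, σ a ∈ J := by
    intro a ha
    have h0 : Polynomial.aeval (Ideal.Quotient.mk I u) (MvPolynomial.aeval v a) = 0 := by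
      rw [hcompa, Ideal.Quotient.eq_zero_iff_mem]
      exact ha
    rw [hσeq]
    exact hqJ _ (hdvd_of _ h0)
  -- the two maps C and σ agree modulo J
  set π := Ideal.Quotient.mkₐ ℚ J with hπdef
  have hπσ : ∀ a, π (Polynomial.C a) = π (σ a) := by
    have hext : π.comp ((Algebra.ofId (MvPolynomial (Fin n) ℚ)
          (Polynomial (MvPolynomial (Fin n) ℚ))).restrictScalars ℚ) = π.comp σ := by
      apply MvPolynomial.algHom_ext
      intro i
      have hCXi : π (Polynomial.C (MvPolynomial.X i)) = π (σ (MvPolynomial.X i)) := by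
        rw [hπdef, Ideal.Quotient.mkₐ_eq_mk, Ideal.Quotient.eq]
        have : σ (MvPolynomial.X i) = (v i).map MvPolynomial.C := by simp [hσdef]
        rw [this]
        exact Ideal.subset_span (Or.inr ⟨i, rfl⟩)
      simpa [Algebra.ofId_apply, Polynomial.algebraMap_eq] using hCXi
    intro a
    have := DFunLike.congr_fun hext a
    simpa [Algebra.ofId_apply, Polynomial.algebraMap_eq] using this
  have hCmemJ : ∀ a ∈ I, Polynomial.C a ∈ J := by
    intro a ha
    have h1 : π (Polynomial.C a) = 0 := by
      rw [hπσ a, hπdef, Ideal.Quotient.mkₐ_eq_mk, Ideal.Quotient.eq_zero_iff_mem]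
      exact hσmem a ha
    rwa [hπdef, Ideal.Quotient.mkₐ_eq_mk, Ideal.Quotient.eq_zero_iff_mem] at h1
  -- X - C u ∈ J
  have hXuJ : Polynomial.X - Polynomial.C u ∈ J := by
    have hd : q ∣ (Polynomial.X - MvPolynomial.aeval v u) := by
      apply hdvd_of
      simp [hcompa u]
    have h2 : σ u - Polynomial.C u ∈ J := by
      have h := hπσ u
      rw [hπdef, Ideal.Quotient.mkₐ_eq_mk] at h
      exact (Ideal.Quotient.eq).1 h.symm
    have hrepr : Polynomial.X - Polynomial.C u
        = (Polynomial.X - MvPolynomial.aeval v u).map MvPolynomial.C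
          + (σ u - Polynomial.C u) := by
      rw [hσeq, Polynomial.map_sub, Polynomial.map_X]
      ring
    rw [hrepr]
    exact add_mem (hqJ _ hd) h2
  -- membership in K via evaluation at u
  have hKmem : ∀ f : Polynomial (MvPolynomial (Fin n) ℚ), f.eval u ∈ I → f ∈ K := by
    intro f hf
    obtain ⟨g, hg⟩ := Polynomial.X_sub_C_dvd_sub_C_eval (a := u) (p := f)
    have : f = (Polynomial.X - Polynomial.C u) * g + Polynomial.C (f.eval u) := by
      rw [← hg]; ring
    rw [this]
    exact add_mem (Ideal.mul_mem_right _ _ (Ideal.subset_span (Or.inr rfl)))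
      (Ideal.subset_span (Or.inl ⟨_, hf, rfl⟩))
  apply le_antisymm
  · rw [hJ, Ideal.span_le]
    rintro f (rfl | ⟨i, rfl⟩)
    · apply hKmem
      have : (q.map (MvPolynomial.C : ℚ →+* MvPolynomial (Fin n) ℚ)).eval u
          = Polynomial.aeval u q := by
        rw [Polynomial.eval_map, Polynomial.aeval_def, MvPolynomial.algebraMap_eq]
      rw [this, ← Ideal.Quotient.eq_zero_iff_mem, hmk, hq]
      exact minpoly.aeval ℚ _
    · apply hKmem
      have : (Polynomial.C (MvPolynomial.X i) - (v i).map MvPolynomial.C).eval u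
          = MvPolynomial.X i - Polynomial.aeval u (v i) := by
        rw [Polynomial.eval_sub, Polynomial.eval_C, Polynomial.eval_map,
          Polynomial.aeval_def, MvPolynomial.algebraMap_eq]
      rw [this]
      exact hv i
  · rw [hK, Ideal.span_le]
    rintro f (⟨a, ha, rfl⟩ | rfl)
    · exact hCmemJ a ha
    · exact hXuJ
end

section
/- Let f₁,…,f_m ∈ ℚ[x₁,…,x_n], I = ⟨f₁,…,f_m⟩, and λ₁,…,λ_n ∈ ℚ with u = λ₁x₁ + ⋯ + λ_nx_n. Suppose q(T) ∈ ℚ[T] is the minimal polynomial over ℚ of the image of u in ℚ[x₁,…,x_n]/I and v₁(T),…,v_n(T) ∈ ℚ[T] satisfy x_i − v_i(u) ∈ I for all i (so that q, v₁,…,v_n is an RUR for I). Let q′(T), v′₁(T), …, v′_n(T) ∈ ℚ[T] be an RUR of a rational component of I with respect to the same λ, i.e., q′ is monic and squarefree of degree d ≥ 1, each v′_i has degree at most d−1, λ₁v′₁(T) + ⋯ + λ_nv′_n(T) ≡ T mod q′(T), and f_j(v′₁(T),…,v′_n(T)) ≡ 0 mod q′(T) for all j = 1,…,m. Then q(T)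 ≡ 0 mod q′(T) (i.e., q′ divides q in ℚ[T]) and v_i(T) ≡ v′_i(T) mod q′(T) for all i = 1,…,n. -/
/-- If `q, v₁,…,v_n` is an RUR for `I = ⟨f₁,…,f_m⟩` (with `q` the minimal polynomial
of the image of `u = λ₁x₁+⋯+λ_n x_n` and `xᵢ − vᵢ(u) ∈ I`), and `q′, v′₁,…,v′_n` is
an RUR of a rational component of `I` with respect to the same `λ`, then `q′ ∣ q`
and `vᵢ ≡ v′ᵢ mod q′` for all `i`. -/
theorem RUR_component_compatibility (n m : ℕ)
    (f : Fin m → MvPolynomial (Fin n) ℚ)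
    (I : Ideal (MvPolynomial (Fin n) ℚ)) (hI : I = Ideal.span (Set.range f))
    (lam : Fin n → ℚ) (q : Polynomial ℚ) (v : Fin n → Polynomial ℚ)
    (hq : q = minpoly ℚ
      (Ideal.Quotient.mk I (∑ i, MvPolynomial.C (lam i) * MvPolynomial.X i)))
    (hv : ∀ i, MvPolynomial.X i -
      Polynomial.aeval (∑ j, MvPolynomial.C (lam j) * MvPolynomial.X j) (v i) ∈ I)
    (q' : Polynomial ℚ) (v' : Fin n → Polynomial ℚ)
    (hRUR : IsRURofRationalComponent f lam q' v') :
    q' ∣ q ∧ ∀ i, q' ∣ (v i - v' i) := by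
  obtain ⟨-, -, -, -, hlin, hgen⟩ := hRUR
  set J : Ideal (Polynomial ℚ) := Ideal.span {q'} with hJ
  set π : Polynomial ℚ →ₐ[ℚ] (Polynomial ℚ ⧸ J) := Ideal.Quotient.mkₐ ℚ J with hπ
  have hmem : ∀ p : Polynomial ℚ, π p = 0 ↔ q' ∣ p := by
    intro p
    rw [hπ, Ideal.Quotient.mkₐ_eq_mk, Ideal.Quotient.eq_zero_iff_mem, hJ,
      Ideal.mem_span_singleton]
  set φ : MvPolynomial (Fin n) ℚ →ₐ[ℚ] (Polynomial ℚ ⧸ J) :=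
    MvPolynomial.aeval (fun i => π (v' i)) with hφ
  have hcomp : ∀ p : MvPolynomial (Fin n) ℚ, φ p = π (MvPolynomial.aeval v' p) := by
    intro p
    have : φ = π.comp (MvPolynomial.aeval v') := by
      apply MvPolynomial.algHom_ext
      intro i
      simp [hφ]
    rw [this]; rfl
  -- φ kills I
  have hkill : ∀ p ∈ I, φ p = 0 := by
    intro p hp
    rw [hcomp, hmem]
    rw [hI] at hp
    refine Submodule.span_induction ?_ ?_ ?_ ?_ hp
    · rintro x ⟨j, rfl⟩; exact hgen j
    · simp
    · intro a b _ _ ha hb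
      simpa [map_add] using dvd_add ha hb
    · intro a b _ hb
      simpa [map_mul, smul_eq_mul] using Dvd.dvd.mul_left hb _
  set u : MvPolynomial (Fin n) ℚ := ∑ i, MvPolynomial.C (lam i) * MvPolynomial.X i with hu
  -- φ u = π X
  have hφu : φ u = π Polynomial.X := by
    have h1 : φ u = π (∑ i, Polynomial.C (lam i) * v' i) := by
      rw [hcomp]
      congr 1
      rw [hu, map_sum]
      refine Finset.sum_congr rfl fun i _ => ?_
      simp [MvPolynomial.algebraMap_eq]
    have h2 : π (∑ i, Polynomial.C (lam i) * v' i - Polynomial.X) = 0 := by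
      rw [hmem]; exact hlin
    rw [map_sub] at h2
    rw [h1]
    linear_combination (norm := skip) h2
    abel
  -- pushing Polynomial.aeval through φ
  have hpush : ∀ p : Polynomial ℚ, φ (Polynomial.aeval u p) = π p := by
    intro p
    rw [← Polynomial.aeval_algHom_apply, hφu]
    have h1 : Polynomial.aeval (π Polynomial.X) p = π p := by
      rw [Polynomial.aeval_algHom_apply]; simp
    exact h1
  constructor
  · -- q' ∣ q
    have hqu : Polynomial.aeval u q ∈ I := by
      have h0 : Ideal.Quotient.mk I (Polynomial.aeval u q) = 0 := by
        have h1 := Polynomial.aeval_algHom_apply (Ideal.Quotient.mkₐ ℚ I) u q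
        simp only [Ideal.Quotient.mkₐ_eq_mk] at h1
        rw [← h1, hq]
        exact minpoly.aeval ℚ _
      exact (Ideal.Quotient.eq_zero_iff_mem).mp h0
    have := hkill _ hqu
    rw [hpush] at this
    exact (hmem q).mp this
  · intro i
    have h0 := hkill _ (hv i)
    rw [map_sub, hpush] at h0
    have hX : φ (MvPolynomial.X i) = π (v' i) := by simp [hφ]
    rw [hX] at h0
    rw [← hmem, map_sub]
    rw [sub_eq_zero] at h0 ⊢
    exact h0.symm
end

section
/- Let q(T) ∈ ℚ[T] be monic of degree d ≥ 1 and let R = ℚ[T]/⟨q(T)⟩. Let F₁,…,F_n ∈ ℚ[x₁,…,x_n], let v₁(T),…,v_n(T) ∈ ℚ[T] each of degree at most d−1, and let λ₁,…,λ_n ∈ ℚ. For each i, write F_i(v₁(T),…,v_n(T)) = m_i(T)q(T) + r_i(T) with deg r_i < d (division with remainder). Assume: (a) λ₁v₁(T) + ⋯ + λ_nv_n(T) = T as polynomials; (b) the derivative q′(T) = dq/dT is invertible in R; (c) the n×n matrix J = (∂F_i/∂x_j evaluated at (v₁(T),…,v_n(T)))_{i,j} is invertible over R; (d) the (n+1)×(n+1)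 matrix J_Φ over R whose top-left n×n block is J, whose last column has entries −m₁(T),…,−m_n(T) and 0, and whose last row is (λ₁,…,λ_n,0), is invertible over R. Define, with all computations in R: w = v − J⁻¹·(F₁(v),…,F_n(v))ᵀ; Δ = λ₁w₁ + ⋯ + λ_nw_n − T; U = (dv/dT) − J⁻¹·(dr/dT), where dv/dT and dr/dT are the componentwise polynomial derivatives; and Λ = λ₁U₁ + ⋯ + λ_nU_n. Then: (i) Λ is a unit in R; (ii) with V = w − (Δ/Λ)·U and Q = q − (Δ/Λ)·q′ (computed in R), the identity [V; Q − T^d] = [v; q − T^d] − J_Φ⁻¹·[F₁(v); …; F_n(v); λ₁v₁ + ⋯ + λ_nv_n − T] holds in R^{n+1}; and (iii) λ₁V₁ + ⋯ + λ_nV_n = T in R. (Proposition 2.7: the global Newton iteration on a rational univariate representation is the Newton iteration for the map Φ.) -/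
/-!
Differentiating `F(v) = m q + r` and reducing modulo `q` gives `J v' = q' m + r'` in `R`, so
`U = q' J⁻¹ m` and `Λ = q' (λ ⬝ J⁻¹ m)`. The Schur complement of `J` in `J_Φ` is `λ ⬝ J⁻¹ m`, so
`det J_Φ = det J (λ ⬝ J⁻¹ m)` and `Λ` is a unit. The Newton correction
`(v - V, q - Q) = (J⁻¹ F(v) + (Δ/Λ) U, (Δ/Λ) q')` is then mapped by `J_Φ` to `(F(v), λ ⬝ v - T)`:
the top block because `J U = q' m`, the bottom one because `λ ⬝ V = T` by the choice of `Δ/Λ`.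
-/

open Polynomial

/-- The quotient ring `R = ℚ[T]/⟨q(T)⟩`. -/
abbrev Rq (q : Polynomial ℚ) : Type := Polynomial ℚ ⧸ Ideal.span ({q} : Set (Polynomial ℚ))

open Matrix MvPolynomial

section ChainRule

variable {R : Type*} [CommRing R] {σ : Type*} [Fintype σ] [DecidableEq σ]

theorem derivative_aeval_eq_sum_pderiv (v : σ → R[X]) (p : MvPolynomial σ R) :
    derivative (aeval v p) = ∑ j, aeval v (pderiv j p) * derivative (v j) := by
  induction p using MvPolynomial.induction_on with
  | C a => simp
  | add p q hp hq => simp [hp, hq, add_mul, Finset.sum_add_distrib]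
  | mul_X p i hp =>
    simp [derivative_mul, hp, pderiv_X, Pi.single_apply, add_mul, Finset.sum_add_distrib,
      Finset.sum_mul, mul_right_comm, apply_ite, Finset.sum_ite_eq, add_comm, mul_comm (v i)]

theorem jacobian_mulVec_derivative_of_eq_mul_add {A : Type*} [CommRing A] {ι : Type*}
    (π : R[X] →+* A) {q : R[X]} (hq : π q = 0) (F : ι → MvPolynomial σ R) (v : σ → R[X])
    (m r : ι → R[X]) (hmr : ∀ i, aeval v (F i) = m i * q + r i) :
    (of fun i j => π (aeval v (pderiv j (F i)))) *ᵥ (fun j => π (derivative (v j))) =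
      π (derivative q) • (fun i => π (m i)) + fun i => π (derivative (r i)) := by
  ext i
  have h := congrArg (fun p => π (derivative p)) (hmr i)
  simp only [derivative_aeval_eq_sum_pderiv, map_sum, map_mul, derivative_mul, map_add,
    hq, mul_zero, zero_add] at h
  simpa [mulVec, dotProduct, mul_comm] using h

end ChainRule

section Bordered

variable {A : Type*} [CommRing A] {ι : Type*} [Fintype ι]

def borderedMatrix (J : Matrix ι ι A) (b c : ι → A) : Matrix (ι ⊕ Unit) (ι ⊕ Unit) A :=
  fromBlocks J (of fun i _ => b i) (of fun _ j => c j) 0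

theorem borderedMatrix_mulVec (J : Matrix ι ι A) (b c x : ι → A) (t : A) :
    borderedMatrix J b c *ᵥ Sum.elim x (fun _ => t) =
      Sum.elim (J *ᵥ x + t • b) (fun _ => c ⬝ᵥ x) := by
  ext (i | _) <;> simp [borderedMatrix, mulVec, dotProduct, mul_comm]

theorem dotProduct_sub_inverse_smul_eq (c w U : ι → A) (T : A) (hU : IsUnit (c ⬝ᵥ U)) :
    c ⬝ᵥ (w - ((c ⬝ᵥ w - T) * Ring.inverse (c ⬝ᵥ U)) • U) = T := by
  rw [dotProduct_sub, dotProduct_smul, smul_eq_mul, mul_assoc, Ring.inverse_mul_cancel _ hU]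
  ring

variable [DecidableEq ι] {J : Matrix ι ι A} {b U : ι → A} {s : A}

theorem det_borderedMatrix (hJ : IsUnit J.det) (c : ι → A) :
    (borderedMatrix J b c).det = -(J.det * (c ⬝ᵥ J⁻¹ *ᵥ b)) := by
  have := J.invertibleOfIsUnitDet hJ
  rw [borderedMatrix, det_fromBlocks₁₁, det_unique (n := Unit), invOf_eq_nonsing_inv]
  simp only [Matrix.sub_apply, Matrix.zero_apply, Matrix.mul_apply, of_apply, Finset.sum_mul,
    mul_assoc, zero_sub, mul_neg, Finset.mul_sum, dotProduct, mulVec, neg_inj]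
  exact Finset.sum_comm

theorem isUnit_dotProduct_of_isUnit_det_borderedMatrix (hJ : IsUnit J.det) (hs : IsUnit s)
    (hJU : J *ᵥ U = s • b) (c : ι → A) (h : IsUnit (borderedMatrix J (-b) c).det) :
    IsUnit (c ⬝ᵥ U) := by
  have := J.invertibleOfIsUnitDet hJ
  have hU : U = s • J⁻¹ *ᵥ b := by rw [← mulVec_smul, ← hJU, inv_mulVec_eq_vec rfl]
  rw [det_borderedMatrix hJ, mulVec_neg, dotProduct_neg, mul_neg, neg_neg] at h
  rw [hU, dotProduct_smul, smul_eq_mul]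
  exact hs.mul (isUnit_of_mul_isUnit_right h)

theorem borderedMatrix_mulVec_newton_correction (hJ : IsUnit J.det) (hJU : J *ᵥ U = s • b)
    (c f : ι → A) (k : A) :
    borderedMatrix J (-b) c *ᵥ Sum.elim (J⁻¹ *ᵥ f + k • U) (fun _ => k * s) =
      Sum.elim f (fun _ => c ⬝ᵥ (J⁻¹ *ᵥ f + k • U)) := by
  rw [borderedMatrix_mulVec, mulVec_add, mulVec_mulVec, mul_nonsing_inv _ hJ, one_mulVec,
    mulVec_smul, hJU, smul_smul, smul_neg, add_neg_cancel_right]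

end Bordered

theorem global_newton_is_newton_for_Phi_general (n : ℕ)
    (q : Polynomial ℚ)
    (F : Fin n → MvPolynomial (Fin n) ℚ)
    (v : Fin n → Polynomial ℚ)
    (lam : Fin n → ℚ)
    (mq r : Fin n → Polynomial ℚ)
    (hmr : ∀ i, MvPolynomial.aeval v (F i) = mq i * q + r i)
    (π : Polynomial ℚ →+* Rq q)
    (hπ : π = Ideal.Quotient.mk (Ideal.span ({q} : Set (Polynomial ℚ))))
    -- (b) `q′(T)` is invertible modulo `q(T)`
    (hb : IsUnit (π (derivative q)))
    -- (c) the Jacobian matrix `J` of `F` evaluated at `v(T)` is invertible over `R`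
    (J : Matrix (Fin n) (Fin n) (Rq q))
    (hJ : J = Matrix.of fun i j => π (MvPolynomial.aeval v (MvPolynomial.pderiv j (F i))))
    (hc : IsUnit J.det)
    -- (d) the bordered Jacobian `J_Φ` is invertible over `R`
    (JΦ : Matrix (Fin n ⊕ Unit) (Fin n ⊕ Unit) (Rq q))
    (hJΦ : JΦ = Matrix.fromBlocks J
      (Matrix.of fun i _ => -π (mq i))
      (Matrix.of fun _ j => π (Polynomial.C (lam j))) 0)
    (hdJΦ : IsUnit JΦ.det)
    -- the quantities of Definition 2.6, computed in `R`
    (w : Fin n → Rq q)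
    (hw : w = fun i => π (v i) -
      (J⁻¹.mulVec fun j => π (MvPolynomial.aeval v (F j))) i)
    (Δ : Rq q) (hΔ : Δ = ∑ i, π (Polynomial.C (lam i)) * w i - π Polynomial.X)
    (U : Fin n → Rq q)
    (hU : U = fun i => π (derivative (v i)) -
      (J⁻¹.mulVec fun j => π (derivative (r j))) i)
    (Λ : Rq q) (hΛ : Λ = ∑ i, π (Polynomial.C (lam i)) * U i)
    (V : Fin n → Rq q) (hV : V = fun i => w i - Δ * Ring.inverse Λ * U i)
    (Q : Rq q) (hQ : Q = π q - Δ * Ring.inverse Λ * π (derivative q)) :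
    -- (i) `Λ` is invertible modulo `q`
    IsUnit Λ ∧
    -- (ii) `(V, Q − T^d) = (v, q − T^d) − J_Φ⁻¹ ⬝ (F(v), Σᵢ λᵢvᵢ − T)` in `R^(n+1)`
    (Sum.elim V (fun _ => Q - π (Polynomial.X ^ q.natDegree)) =
      Sum.elim (fun i => π (v i)) (fun _ => π q - π (Polynomial.X ^ q.natDegree)) -
        JΦ⁻¹.mulVec (Sum.elim (fun i => π (MvPolynomial.aeval v (F i)))
          (fun _ => ∑ i, π (Polynomial.C (lam i)) * π (v i) - π Polynomial.X))) ∧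
    -- (iii) `Σᵢ λᵢVᵢ = T` in `R`
    ∑ i, π (Polynomial.C (lam i)) * V i = π Polynomial.X := by
  have hq : π q = 0 := hπ ▸ Ideal.Quotient.eq_zero_iff_mem.mpr (Ideal.mem_span_singleton_self q)
  have hJΦ' : JΦ = borderedMatrix J (-fun i => π (mq i)) fun i => π (C (lam i)) := hJΦ
  have hJU : J *ᵥ U = π (derivative q) • fun i => π (mq i) := by
    have hJv := hJ ▸ jacobian_mulVec_derivative_of_eq_mul_add π hq F v mq r hmr
    rw [show U = _ - _ from hU, mulVec_sub, mulVec_mulVec, mul_nonsing_inv _ hc, one_mulVec, hJv,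
      add_sub_cancel_right]
  have hΛu : IsUnit Λ :=
    hΛ ▸ isUnit_dotProduct_of_isUnit_det_borderedMatrix hc hb hJU _ (hJΦ' ▸ hdJΦ)
  have hiii : ∑ i, π (C (lam i)) * V i = π X := by
    subst hV hΔ hΛ
    exact dotProduct_sub_inverse_smul_eq _ w U _ hΛu
  refine ⟨hΛu, ?_, hiii⟩
  have hx : (fun i => π (v i)) - V =
      (J⁻¹ *ᵥ fun i => π (aeval v (F i))) + (Δ * Ring.inverse Λ) • U := by
    ext i
    simp only [hV, hw, Pi.sub_apply, Pi.add_apply, Pi.smul_apply, smul_eq_mul]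
    ring
  have hstep : JΦ *ᵥ Sum.elim ((fun i => π (v i)) - V) (fun _ => π q - Q) =
      Sum.elim (fun i => π (aeval v (F i))) (fun _ => ∑ i, π (C (lam i)) * π (v i) - π X) := by
    rw [show π q - Q = Δ * Ring.inverse Λ * π (derivative q) by rw [hQ]; ring, hJΦ', hx,
      borderedMatrix_mulVec_newton_correction hc hJU, ← hx, dotProduct_sub]
    exact congrArg _ (funext fun _ => congrArg _ hiii)
  have := JΦ.invertibleOfIsUnitDet hdJΦ
  rw [inv_mulVec_eq_vec hstep.symm]
  ext (i | _) <;> simp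

/-- Proposition 2.7: the global Newton iteration on a rational univariate
representation is the Newton iteration for the map `Φ`.  With `q` monic of degree
`d ≥ 1`, `R = ℚ[T]/⟨q⟩`, division with remainder `Fᵢ(v(T)) = mᵢ(T)q(T) + rᵢ(T)`,
`Σ λᵢ vᵢ(T) = T`, `q′` invertible in `R`, the Jacobian `J = (∂Fᵢ/∂xⱼ (v(T)))`
invertible over `R`, and the bordered Jacobian `J_Φ` invertible over `R`, setting
`w = v − J⁻¹ F(v)`, `Δ = Σ λᵢ wᵢ − T`, `U = v′ − J⁻¹ r′`, `Λ = Σ λᵢ Uᵢ`, we have: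
(i) `Λ` is a unit in `R`; (ii) with `V = w − (Δ/Λ)U` and `Q = q − (Δ/Λ)q′`, the
vector `(V, Q − T^d)` equals `(v, q − T^d) − J_Φ⁻¹·(F(v), Σ λᵢvᵢ − T)` in `R^(n+1)`;
and (iii) `Σ λᵢ Vᵢ = T` in `R`. -/
theorem global_newton_is_newton_for_Phi (n : ℕ)
    (q : Polynomial ℚ) (hqmonic : q.Monic) (hd : 1 ≤ q.natDegree)
    (F : Fin n → MvPolynomial (Fin n) ℚ)
    (v : Fin n → Polynomial ℚ) (hvdeg : ∀ i, (v i).degree < q.degree)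
    (lam : Fin n → ℚ)
    (mq r : Fin n → Polynomial ℚ)
    (hmr : ∀ i, MvPolynomial.aeval v (F i) = mq i * q + r i)
    (hrdeg : ∀ i, (r i).degree < q.degree)
    (π : Polynomial ℚ →+* Rq q)
    (hπ : π = Ideal.Quotient.mk (Ideal.span ({q} : Set (Polynomial ℚ))))
    -- (a) `λ₁v₁(T) + ⋯ + λ_n v_n(T) = T` as polynomials
    (ha : ∑ i, Polynomial.C (lam i) * v i = Polynomial.X)
    -- (b) `q′(T)` is invertible modulo `q(T)`
    (hb : IsUnit (π (derivative q)))
    -- (c) the Jacobian matrix `J` of `F` evaluated at `v(T)` is invertible over `R`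
    (J : Matrix (Fin n) (Fin n) (Rq q))
    (hJ : J = Matrix.of fun i j => π (MvPolynomial.aeval v (MvPolynomial.pderiv j (F i))))
    (hc : IsUnit J.det)
    -- (d) the bordered Jacobian `J_Φ` is invertible over `R`
    (JΦ : Matrix (Fin n ⊕ Unit) (Fin n ⊕ Unit) (Rq q))
    (hJΦ : JΦ = Matrix.fromBlocks J
      (Matrix.of fun i _ => -π (mq i))
      (Matrix.of fun _ j => π (Polynomial.C (lam j))) 0)
    (hdJΦ : IsUnit JΦ.det)
    -- the quantities of Definition 2.6, computed in `R`
    (w : Fin n → Rq q)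
    (hw : w = fun i => π (v i) -
      (J⁻¹.mulVec fun j => π (MvPolynomial.aeval v (F j))) i)
    (Δ : Rq q) (hΔ : Δ = ∑ i, π (Polynomial.C (lam i)) * w i - π Polynomial.X)
    (U : Fin n → Rq q)
    (hU : U = fun i => π (derivative (v i)) -
      (J⁻¹.mulVec fun j => π (derivative (r j))) i)
    (Λ : Rq q) (hΛ : Λ = ∑ i, π (Polynomial.C (lam i)) * U i)
    (V : Fin n → Rq q) (hV : V = fun i => w i - Δ * Ring.inverse Λ * U i)
    (Q : Rq q) (hQ : Q = π q - Δ * Ring.inverse Λ * π (derivative q)) :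
    -- (i) `Λ` is invertible modulo `q`
    IsUnit Λ ∧
    -- (ii) `(V, Q − T^d) = (v, q − T^d) − J_Φ⁻¹ ⬝ (F(v), Σᵢ λᵢvᵢ − T)` in `R^(n+1)`
    (Sum.elim V (fun _ => Q - π (Polynomial.X ^ q.natDegree)) =
      Sum.elim (fun i => π (v i)) (fun _ => π q - π (Polynomial.X ^ q.natDegree)) -
        JΦ⁻¹.mulVec (Sum.elim (fun i => π (MvPolynomial.aeval v (F i)))
          (fun _ => ∑ i, π (Polynomial.C (lam i)) * π (v i) - π Polynomial.X))) ∧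
    -- (iii) `Σᵢ λᵢVᵢ = T` in `R`
    ∑ i, π (Polynomial.C (lam i)) * V i = π Polynomial.X :=
  global_newton_is_newton_for_Phi_general n q F v lam mq r hmr π hπ hb J hJ hc JΦ hJΦ hdJΦ w hw Δ hΔ
    U hU Λ hΛ V hV Q hQ
end

section
/- In ℚ[T], set q(T) = (T−1)(T+1)(T−3)(T+3)(T²+1)(T²+9), v₁(T) = (−T⁵ + 121T)/120, v₂(T) = (−T⁵ + 61T)/60, v₃(T) = (T⁵ − 121T)/120, and v₄(T) = (T⁵ − 61T)/60. Then: (i) v₁(T) + 2v₂(T) − v₃(T) + 3v₄(T) = T as polynomials; and (ii) q(T) divides each of h₁(v₁,v₂,v₃,v₄), h₂(v₁,v₂,v₃,v₄), h₃(v₁,v₂,v₃,v₄), h₄(v₁,v₂,v₃,v₄) in ℚ[T], where h₁ = x₁ + x₂ + x₃ + x₄, h₂ = x₁x₂ + x₂x₃ + x₃x₄ + x₄x₁, h₃ = x₁x₂x₃ + x₂x₃x₄ + x₃x₄x₁ + x₄x₁x₂, and h₄ = x₁x₂x₃x₄ − 1 are the cyclic-4 polynomials. -/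
open MvPolynomial

/-- Section 4.3 (cyclic-4): the displayed `q, v₁, v₂, v₃, v₄` form an RUR of the
component of the 8 isosingular points of the cyclic-4 system, with primitive
element `u = x₁ + 2x₂ − x₃ + 3x₄`: (i) `v₁ + 2v₂ − v₃ + 3v₄ = T`; (ii) `q` divides
each `hⱼ(v₁,v₂,v₃,v₄)` in `ℚ[T]`, where `h₁,…,h₄` are the cyclic-4 polynomials. -/
theorem cyclic4_RUR
    (q v₁ v₂ v₃ v₄ : Polynomial ℚ)
    (hq : q = (Polynomial.X - 1) * (Polynomial.X + 1) * (Polynomial.X - 3) *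
      (Polynomial.X + 3) * (Polynomial.X ^ 2 + 1) * (Polynomial.X ^ 2 + 9))
    (hv₁ : v₁ = Polynomial.C (1 / 120 : ℚ) * (-Polynomial.X ^ 5 + 121 * Polynomial.X))
    (hv₂ : v₂ = Polynomial.C (1 / 60 : ℚ) * (-Polynomial.X ^ 5 + 61 * Polynomial.X))
    (hv₃ : v₃ = Polynomial.C (1 / 120 : ℚ) * (Polynomial.X ^ 5 - 121 * Polynomial.X))
    (hv₄ : v₄ = Polynomial.C (1 / 60 : ℚ) * (Polynomial.X ^ 5 - 61 * Polynomial.X))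
    (h₁ h₂ h₃ h₄ : MvPolynomial (Fin 4) ℚ)
    (hh₁ : h₁ = X 0 + X 1 + X 2 + X 3)
    (hh₂ : h₂ = X 0 * X 1 + X 1 * X 2 + X 2 * X 3 + X 3 * X 0)
    (hh₃ : h₃ = X 0 * X 1 * X 2 + X 1 * X 2 * X 3 + X 2 * X 3 * X 0 + X 3 * X 0 * X 1)
    (hh₄ : h₄ = X 0 * X 1 * X 2 * X 3 - 1) :
    (v₁ + 2 * v₂ - v₃ + 3 * v₄ = Polynomial.X) ∧
    ∀ h ∈ ({h₁, h₂, h₃, h₄} : Set (MvPolynomial (Fin 4) ℚ)),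
      q ∣ aeval ![v₁, v₂, v₃, v₄] h := by
  subst hq hv₁ hv₂ hv₃ hv₄ hh₁ hh₂ hh₃ hh₄
  have ev : ∀ p₁ p₂ : Polynomial ℚ, (∀ r : ℚ, p₁.eval r = p₂.eval r) → p₁ = p₂ :=
    fun _ _ h => Polynomial.funext h
  constructor
  · apply ev; intro r; simp; ring
  · intro h hh
    simp only [Set.mem_insert_iff, Set.mem_singleton_iff] at hh
    rcases hh with rfl | rfl | rfl | rfl <;>
      simp only [map_add, map_mul, map_sub, map_one, aeval_X,
        Matrix.cons_val_zero, Matrix.cons_val_one, Matrix.head_cons,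
        Matrix.cons_val_two, Matrix.tail_cons, Matrix.cons_val_three]
    · exact Dvd.intro 0 (by apply ev; intro r; simp; ring)
    · exact Dvd.intro 0 (by apply ev; intro r; simp; ring)
    · exact Dvd.intro 0 (by apply ev; intro r; simp; ring)
    · refine ⟨Polynomial.C (-1/81 : ℚ) + Polynomial.C (8227/17280000 : ℚ) * Polynomial.X ^ 4
        + Polynomial.C (-47/8640000 : ℚ) * Polynomial.X ^ 8
        + Polynomial.C (1/51840000 : ℚ) * Polynomial.X ^ 12, ?_⟩
      apply ev; intro r; simp; ring
end

section
/- Let g₁ = x₁³x₃ − 4x₁²x₂x₄ − 4x₁x₂²x₃ − 2x₂³x₄ − 4x₁² − 4x₁x₃ + 10x₂² + 10x₂x₄ − 2, g₂ = x₁x₃³ − 4x₁x₃x₄² − 4x₂x₃²x₄ − 2x₂x₄³ − 4x₁x₃ + 10x₂x₄ − 4x₃² + 10x₄² − 2, g₃ = 2x₁x₂x₄ + x₂²x₃ − 2x₁ − x₃, g₄ = x₁x₄² + 2x₂x₃x₄ − x₁ − 2x₃ in ℚ[x₁,x₂,x₃,x₄] (the Caprasse system). In ℚ[T], set q(T) =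 (T² + 4/3)(T² + 12)(T² − 16T + 76)(T² + 16T + 76), v₁(T) = −(4107T⁷ − 347060T⁵ + 15954064T³ + 361834048T)/339935232, v₂(T) = −(6999T⁷ − 672196T⁵ + 32397008T³ + 384342848T)/679870464, v₃(T) = (1851T⁷ − 169876T⁵ + 8058512T³ + 181018688T)/169967616, v₄(T) = (6999T⁷ − 672196T⁵ + 32397008T³ + 384342848T)/679870464. Then: (i) v₁(T) − v₂(T) + 3v₃(T) − 3v₄(T) = T as polynomials; and (ii) q(T) divides each of g₁(v₁,v₂,v₃,v₄), g₂(v₁,v₂,v₃,v₄), g₃(v₁,v₂,v₃,v₄), g₄(v₁,v₂,v₃,v₄) in ℚ[T]. -/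
open MvPolynomial

noncomputable def c1 : Polynomial ℚ := Polynomial.C (-1/46208 : ℚ) + Polynomial.C (3839645566187/217269282633940992 : ℚ) * Polynomial.X ^ 2 + Polynomial.C (127009455420490542232609/20123788856518959904260620288 : ℚ) * Polynomial.X ^ 4 + Polynomial.C (2548290432656962247017/7546420821194609964097732608 : ℚ) * Polynomial.X ^ 6 + Polynomial.C (-642486656162721178519/80495155426075839617042481152 : ℚ) * Polynomial.X ^ 8 + Polynomial.C (-19545013391559616327/80495155426075839617042481152 : ℚ) * Polynomial.X ^ 10 + Polynomial.C (128520295245149175077/7727534920903280603236078190592 : ℚ) * Polynomial.X ^ 12 + Polynomial.C (-180921487392619583/482970932556455037702254886912 : ℚ) * Polynomial.X ^ 14 + Polynomial.C (98322890727051213/20606759789075414941962875174912 : ℚ) * Polynomial.X ^ 16 + Polynomial.C (-53775768460347/1585135368390416533997144244224 : ℚ) * Polynomial.X ^ 18 + Polynomial.C (159462373970457/1318832626500826556285624011194368 : ℚ) * Polynomial.X ^ 20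

noncomputable def c2 : Polynomial ℚ := Polynomial.C (-1/46208 : ℚ) + Polynomial.C (1913833878109/108634641316970496 : ℚ) * Polynomial.X ^ 2 + Polynomial.C (127015819415712115258889/20123788856518959904260620288 : ℚ) * Polynomial.X ^ 4 + Polynomial.C (853847115909115687615/2515473607064869988032577536 : ℚ) * Polynomial.X ^ 6 + Polynomial.C (-633886217682351065039/80495155426075839617042481152 : ℚ) * Polynomial.X ^ 8 + Polynomial.C (-19933150432376780663/80495155426075839617042481152 : ℚ) * Polynomial.X ^ 10 + Polynomial.C (42443226033043625935/2575844973634426867745359396864 : ℚ) * Polynomial.X ^ 12 + Polynomial.C (-88358919061115779/241485466278227518851127443456 : ℚ) * Polynomial.X ^ 14 + Polynomial.C (94670654013028725/20606759789075414941962875174912 : ℚ) * Polynomial.X ^ 16 + Polynomial.C (-51054982026651/1585135368390416533997144244224 : ℚ) * Polynomial.X ^ 18 + Polynomial.C (148910263747137/1318832626500826556285624011194368 : ℚ) * Polynomial.X ^ 20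

noncomputable def c3 : Polynomial ℚ := Polynomial.C (353155/30679154688 : ℚ) * Polynomial.X + Polynomial.C (9214810183964773/4262320175360243662848 : ℚ) * Polynomial.X ^ 3 + Polynomial.C (474491942333639/17049280701440974651392 : ℚ) * Polynomial.X ^ 5 + Polynomial.C (-89487894740119/34098561402881949302784 : ℚ) * Polynomial.X ^ 7 + Polynomial.C (8974010746871/136394245611527797211136 : ℚ) * Polynomial.X ^ 9 + Polynomial.C (-254268446413/363717988297407459229696 : ℚ) * Polynomial.X ^ 11 + Polynomial.C (5404788777/1454871953189629836918784 : ℚ) * Polynomial.X ^ 13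

noncomputable def c4 : Polynomial ℚ := Polynomial.C (-808573/70123782144 : ℚ) * Polynomial.X + Polynomial.C (-12296638748180135/5683093567146991550464 : ℚ) * Polynomial.X ^ 3 + Polynomial.C (-1919232796535419/68197122805763898605568 : ℚ) * Polynomial.X ^ 5 + Polynomial.C (119242122757893/45464748537175932403712 : ℚ) * Polynomial.X ^ 7 + Polynomial.C (-35461450926515/545576982446111188844544 : ℚ) * Polynomial.X ^ 9 + Polynomial.C (995129058061/1454871953189629836918784 : ℚ) * Polynomial.X ^ 11 + Polynomial.C (-20884365093/5819487812758519347675136 : ℚ) * Polynomial.X ^ 13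

/-- Section 4.2 (Caprasse system): the displayed `q, v₁, v₂, v₃, v₄` form an RUR,
with primitive element `u = x₁ − x₂ + 3x₃ − 3x₄`, of the rational component of the
8 multiplicity-four roots: (i) `v₁ − v₂ + 3v₃ − 3v₄ = T`; (ii) `q` divides each
`gⱼ(v₁,v₂,v₃,v₄)` in `ℚ[T]`. -/
theorem caprasse_RUR
    (g₁ g₂ g₃ g₄ : MvPolynomial (Fin 4) ℚ)
    (hg₁ : g₁ = X 0 ^ 3 * X 2 - 4 * X 0 ^ 2 * X 1 * X 3 - 4 * X 0 * X 1 ^ 2 * X 2 -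
      2 * X 1 ^ 3 * X 3 - 4 * X 0 ^ 2 - 4 * X 0 * X 2 + 10 * X 1 ^ 2 +
      10 * X 1 * X 3 - 2)
    (hg₂ : g₂ = X 0 * X 2 ^ 3 - 4 * X 0 * X 2 * X 3 ^ 2 - 4 * X 1 * X 2 ^ 2 * X 3 -
      2 * X 1 * X 3 ^ 3 - 4 * X 0 * X 2 + 10 * X 1 * X 3 - 4 * X 2 ^ 2 +
      10 * X 3 ^ 2 - 2)
    (hg₃ : g₃ = 2 * X 0 * X 1 * X 3 + X 1 ^ 2 * X 2 - 2 * X 0 - X 2)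
    (hg₄ : g₄ = X 0 * X 3 ^ 2 + 2 * X 1 * X 2 * X 3 - X 0 - 2 * X 2)
    (q v₁ v₂ v₃ v₄ : Polynomial ℚ)
    (hq : q = (Polynomial.X ^ 2 + Polynomial.C (4 / 3 : ℚ)) * (Polynomial.X ^ 2 + 12) *
      (Polynomial.X ^ 2 - 16 * Polynomial.X + 76) *
      (Polynomial.X ^ 2 + 16 * Polynomial.X + 76))
    (hv₁ : v₁ = -(Polynomial.C (1 / 339935232 : ℚ) *
      (4107 * Polynomial.X ^ 7 - 347060 * Polynomial.X ^ 5 +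
        15954064 * Polynomial.X ^ 3 + 361834048 * Polynomial.X)))
    (hv₂ : v₂ = -(Polynomial.C (1 / 679870464 : ℚ) *
      (6999 * Polynomial.X ^ 7 - 672196 * Polynomial.X ^ 5 +
        32397008 * Polynomial.X ^ 3 + 384342848 * Polynomial.X)))
    (hv₃ : v₃ = Polynomial.C (1 / 169967616 : ℚ) *
      (1851 * Polynomial.X ^ 7 - 169876 * Polynomial.X ^ 5 +
        8058512 * Polynomial.X ^ 3 + 181018688 * Polynomial.X))
    (hv₄ : v₄ = Polynomial.C (1 / 679870464 : ℚ) *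
      (6999 * Polynomial.X ^ 7 - 672196 * Polynomial.X ^ 5 +
        32397008 * Polynomial.X ^ 3 + 384342848 * Polynomial.X)) :
    (v₁ - v₂ + 3 * v₃ - 3 * v₄ = Polynomial.X) ∧
    ∀ g ∈ ({g₁, g₂, g₃, g₄} : Set (MvPolynomial (Fin 4) ℚ)),
      q ∣ aeval ![v₁, v₂, v₃, v₄] g := by
  subst hg₁ hg₂ hg₃ hg₄ hq hv₁ hv₂ hv₃ hv₄
  constructor
  · apply Polynomial.funext; intro x
    simp only [Polynomial.eval_add, Polynomial.eval_sub, Polynomial.eval_mul,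
      Polynomial.eval_pow, Polynomial.eval_neg, Polynomial.eval_C, Polynomial.eval_X,
      Polynomial.eval_ofNat]
    ring
  intro g hg
  simp only [Set.mem_insert_iff, Set.mem_singleton_iff] at hg
  rcases hg with rfl | hg
  · refine ⟨c1, ?_⟩
    unfold c1
    simp only [map_sub, map_add, map_mul, map_pow, map_ofNat, aeval_X,
      Matrix.cons_val_zero, Matrix.cons_val_one, Matrix.head_cons,
      Matrix.cons_val_two, Matrix.tail_cons, Matrix.cons_val_three]
    apply Polynomial.funext; intro x
    simp only [Polynomial.eval_add, Polynomial.eval_sub, Polynomial.eval_mul,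
      Polynomial.eval_pow, Polynomial.eval_neg, Polynomial.eval_C, Polynomial.eval_X,
      Polynomial.eval_ofNat]
    ring
  rcases hg with rfl | hg
  · refine ⟨c2, ?_⟩
    unfold c2
    simp only [map_sub, map_add, map_mul, map_pow, map_ofNat, aeval_X,
      Matrix.cons_val_zero, Matrix.cons_val_one, Matrix.head_cons,
      Matrix.cons_val_two, Matrix.tail_cons, Matrix.cons_val_three]
    apply Polynomial.funext; intro x
    simp only [Polynomial.eval_add, Polynomial.eval_sub, Polynomial.eval_mul,
      Polynomial.eval_pow, Polynomial.eval_neg, Polynomial.eval_C, Polynomial.eval_X,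
      Polynomial.eval_ofNat]
    ring
  rcases hg with rfl | hg
  · refine ⟨c3, ?_⟩
    unfold c3
    simp only [map_sub, map_add, map_mul, map_pow, map_ofNat, aeval_X,
      Matrix.cons_val_zero, Matrix.cons_val_one, Matrix.head_cons,
      Matrix.cons_val_two, Matrix.tail_cons, Matrix.cons_val_three]
    apply Polynomial.funext; intro x
    simp only [Polynomial.eval_add, Polynomial.eval_sub, Polynomial.eval_mul,
      Polynomial.eval_pow, Polynomial.eval_neg, Polynomial.eval_C, Polynomial.eval_X,
      Polynomial.eval_ofNat]
    ring
  subst hg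
  refine ⟨c4, ?_⟩
  unfold c4
  simp only [map_sub, map_add, map_mul, map_pow, map_ofNat, aeval_X,
    Matrix.cons_val_zero, Matrix.cons_val_one, Matrix.head_cons,
    Matrix.cons_val_two, Matrix.tail_cons, Matrix.cons_val_three]
  apply Polynomial.funext; intro x
  simp only [Polynomial.eval_add, Polynomial.eval_sub, Polynomial.eval_mul,
    Polynomial.eval_pow, Polynomial.eval_neg, Polynomial.eval_C, Polynomial.eval_X,
    Polynomial.eval_ofNat]
  ring
end
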